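/- Let K ⊆ ℂ^p be a determining compact set. Suppose that for each d ∈ ℕ we are given a finite subset A_d ⊆ K and a constant C_d ≥ 1 such that max_{z∈K} |P(z)| ≤ C_d·max_{a∈A_d} |P(a)| for every polynomial of total degree ≤ d, and that lim_{d→∞} C_d^{1/d} = 1 (a weakly admissible mesh). Choose ξ_0 ∈ A_0 arbitrarily, and for each d ≥ 1 and each N with h_{d−1} ≤ N < h_d choose ξ_N ∈ A_d with |vdm(ξ_0,…,ξ_{N−1}, ξ_N)| = max_{ξ∈A_d} |vdm(ξ_0,…,ξ_{N−1}, ξ)|. Then (ξ_N)_{N≥0} is a pseudo Leja sequence for K with Edrei growth (M̄_N)_{N≥1}, where M̄_N = C_d for h_{d−1} ≤ N < h_d. -/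

import Mathlib

/-!
For `h_{d-1} ≤ j < h_d` every exponent `κ N` with `N ≤ j` has total degree at most `d`, because the
graded order enumerates the `h_d` multi-indices of degree `≤ d` before all others. Expanding the
Vandermonde determinant along its last row, `z ↦ vdm(ξ_0, …, ξ_{j-1}, z)` is then a polynomial of
degree `≤ d`, so the mesh inequality bounds its maximum on `K` by `C_d` times its maximum on `A_d`,
and that maximum is attained at `ξ_j` by the discrete Leja choice. The growth condition is the one
on `C_d`, since `N ↦ C (degOf p N)` is constant equal to `C_d` on the block `[h_{d-1}, h_d)`.
-/

open scoped BigOperators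
open Filter

namespace PseudoLeja

/-- Graded lexicographic strict order on multi-indices in `ℕ^p`:
`α ≺ β` iff `|α| < |β|`, or `|α| = |β|` and the leftmost nonzero entry of `α - β`
is negative (i.e. at the first index where they differ, `α` is smaller). -/
def GLexLT {p : ℕ} (α β : Fin p → ℕ) : Prop :=
  (∑ i, α i) < (∑ i, β i) ∨
    ((∑ i, α i) = (∑ i, β i) ∧ ∃ k, (∀ i, i < k → α i = β i) ∧ α k < β k)

/-- `κ : ℕ → ℕ^p` is the (unique) enumeration of all multi-indices that is strictly
increasing from the usual order on `ℕ` to the graded lexicographic order. -/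
def IsGLexEnum {p : ℕ} (κ : ℕ → Fin p → ℕ) : Prop :=
  Function.Bijective κ ∧ ∀ m n : ℕ, m < n → GLexLT (κ m) (κ n)

/-- The `N`-th monomial `e_N(z) = z^{κ(N)}`. -/
noncomputable def mono {p : ℕ} (κ : ℕ → Fin p → ℕ) (N : ℕ) (z : Fin p → ℂ) : ℂ :=
  ∏ i, z i ^ κ N i

/-- Vandermonde determinant of the points `ξ 0, …, ξ (n-1)`:
`vdm κ n ξ = det [e_N(ξ_M)]_{0 ≤ M, N ≤ n-1}`. -/
noncomputable def vdm {p : ℕ} (κ : ℕ → Fin p → ℕ) (n : ℕ) (ξ : ℕ → Fin p → ℂ) : ℂ :=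
  Matrix.det (Matrix.of fun M N : Fin n => mono κ (N : ℕ) (ξ (M : ℕ)))

/-- A set `K ⊆ ℂ^p` is determining if no nonzero polynomial in `p` complex
variables vanishes identically on `K`. -/
def Determining {p : ℕ} (K : Set (Fin p → ℂ)) : Prop :=
  ∀ P : MvPolynomial (Fin p) ℂ, (∀ z ∈ K, MvPolynomial.eval z P = 0) → P = 0

/-- `h_d = C(p+d, d)`, the dimension of the space of polynomials of total degree
at most `d` in `p` variables. -/
def hdim (p d : ℕ) : ℕ := Nat.choose (p + d) d

/-- `l_d = p·C(p+d, p+1)`, the degree of the Vandermonde determinant of `h_d` points. -/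
def ldim (p d : ℕ) : ℕ := p * Nat.choose (p + d) (p + 1)

/-- `V_j(K)`, the maximal modulus of the Vandermonde determinant of `j` points of `K`. -/
noncomputable def Vsup {p : ℕ} (κ : ℕ → Fin p → ℕ) (K : Set (Fin p → ℂ)) (j : ℕ) : ℝ :=
  sSup { v : ℝ | ∃ ξ : ℕ → Fin p → ℂ, (∀ i, ξ i ∈ K) ∧ v = ‖vdm κ j ξ‖ }

/-- `(ξ_j)_{j≥0} ⊆ K` is a pseudo Leja sequence for `K` with Edrei growth `(M_j)_{j≥1}`:
`M_j ≥ 1`, `M_j·|vdm(ξ_0,…,ξ_j)| ≥ max_{z∈K} |vdm(ξ_0,…,ξ_{j-1},z)|` for `j ≥ 1`, and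
`lim_{d→∞} (max_{h_{d-1} ≤ j < h_d} M_j)^{1/d} = 1`. -/
def IsPseudoLeja {p : ℕ} (κ : ℕ → Fin p → ℕ) (K : Set (Fin p → ℂ))
    (ξ : ℕ → Fin p → ℂ) (M : ℕ → ℝ) : Prop :=
  (∀ j, ξ j ∈ K) ∧
  (∀ j, 1 ≤ j → 1 ≤ M j) ∧
  (∀ j, 1 ≤ j → ∀ z ∈ K,
    ‖vdm κ (j + 1) (Function.update ξ j z)‖ ≤
      M j * ‖vdm κ (j + 1) ξ‖) ∧
  Filter.Tendsto
    (fun d : ℕ => (sSup (M '' Set.Ico (hdim p (d - 1)) (hdim p d))) ^ ((d : ℝ)⁻¹))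
    Filter.atTop (nhds 1)

/-- The degree of the index `N`: the least `d` with `N < h_d`; for
`h_{d-1} ≤ N < h_d` this equals `d`. -/
noncomputable def degOf (p N : ℕ) : ℕ := sInf { d : ℕ | N < hdim p d }

end PseudoLeja

open MvPolynomial Finset

lemma Matrix.det_updateRow_eq_sum_mul {n R : Type*} [CommRing R] [Fintype n] [DecidableEq n]
    (A : Matrix n n R) (r : n) (v : n → R) :
    (A.updateRow r v).det = ∑ k, v k * (A.updateRow r (Pi.single k 1)).det := by
  let F := (Matrix.detRowAlternating (R := R) (n := n)).toMultilinearMap.toLinearMap A r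
  change F v = ∑ k, v k * F (Pi.single k 1)
  conv_lhs => rw [← univ_sum_single v]
  refine (map_sum F _ _).trans (sum_congr rfl fun k _ => ?_)
  rw [← smul_eq_mul, ← map_smul, ← Pi.single_smul, smul_eq_mul, mul_one]

lemma Finset.Nat.card_antidiagonalTuple (k n : ℕ) :
    #(Nat.antidiagonalTuple k n) = (k + n - 1).choose n := by
  rw [← Fintype.card_coe]
  refine (Fintype.card_congr ((Sym.equivNatSumOfFintype (Fin k) n).trans
    (Equiv.subtypeEquivRight fun _ => Nat.mem_antidiagonalTuple.symm)).symm).trans ?_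
  rw [Sym.card_sym_eq_choose, Fintype.card_fin]

namespace PseudoLeja

lemma hdim_succ (p d : ℕ) : hdim p (d + 1) = hdim p d + (p + d).choose (d + 1) := by
  rw [hdim, hdim, ← Nat.add_assoc, Nat.choose_succ_succ']

lemma hdim_monotone (p : ℕ) : Monotone (hdim p) :=
  monotone_nat_of_le_succ fun d => (hdim_succ p d).symm ▸ Nat.le_add_right _ _

lemma hdim_strictMono {p : ℕ} (hp : 1 ≤ p) : StrictMono (hdim p) :=
  strictMono_nat_of_lt_succ fun d => by
    rw [hdim_succ]
    have := Nat.choose_pos (show d + 1 ≤ p + d by omega)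
    omega

lemma lt_hdim_degOf {p : ℕ} (hp : 1 ≤ p) (N : ℕ) : N < hdim p (degOf p N) :=
  Nat.sInf_mem (s := {d | N < hdim p d})
    ⟨N + 1, ((hdim_strictMono hp).id_le N).trans_lt (hdim_strictMono hp N.lt_succ_self)⟩

lemma one_le_degOf {p N : ℕ} (hp : 1 ≤ p) (hN : 1 ≤ N) : 1 ≤ degOf p N := by
  by_contra! h
  have := lt_hdim_degOf hp N
  rw [Nat.lt_one_iff.1 h, hdim, Nat.choose_zero_right] at this
  omega

lemma hdim_degOf_sub_one_le {p N : ℕ} (hp : 1 ≤ p) (hN : 1 ≤ N) :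
    hdim p (degOf p N - 1) ≤ N :=
  not_lt.1 <| Nat.notMem_of_lt_sInf (s := {d | N < hdim p d})
    (Nat.sub_lt (one_le_degOf hp hN) one_pos)

lemma degOf_eq {p d N : ℕ} (h1 : hdim p (d - 1) ≤ N) (h2 : N < hdim p d) : degOf p N = d := by
  refine le_antisymm (Nat.sInf_le h2) (not_lt.1 fun h => ?_)
  have hmem : N < hdim p (degOf p N) := Nat.sInf_mem (s := {e | N < hdim p e}) ⟨d, h2⟩
  have := hdim_monotone p (Nat.le_sub_one_of_lt h)
  omega

lemma image_Ico_hdim_degOf {β : Type*} {p d : ℕ} (hp : 1 ≤ p) (hd : 1 ≤ d) (f : ℕ → β) :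
    (fun N => f (degOf p N)) '' Set.Ico (hdim p (d - 1)) (hdim p d) = {f d} := by
  have hne : (Set.Ico (hdim p (d - 1)) (hdim p d)).Nonempty :=
    Set.nonempty_Ico.2 (hdim_strictMono hp (by omega))
  rw [← hne.image_const (f d)]
  exact Set.image_congr fun N hN => by rw [degOf_eq hN.1 hN.2]

/-- Multi-indices of degree `≤ d` in `p` variables are the `(p + 1)`-tuples of sum `d` with the
last (slack) entry dropped. -/
lemma card_image_init_antidiagonalTuple (p d : ℕ) :
    #((Nat.antidiagonalTuple (p + 1) d).image Fin.init) = hdim p d := by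
  rw [card_image_of_injOn, Nat.card_antidiagonalTuple, hdim, Nat.add_right_comm, Nat.add_sub_cancel]
  intro α hα β hβ hαβ
  have hα' := Nat.mem_antidiagonalTuple.1 hα
  have hβ' := Nat.mem_antidiagonalTuple.1 hβ
  rw [Fin.sum_univ_castSucc] at hα' hβ'
  have hinit : ∀ i : Fin p, α i.castSucc = β i.castSucc := fun i => congrFun hαβ i
  have hlast : α (Fin.last p) = β (Fin.last p) := by
    simp only [hinit] at hα'
    omega
  exact funext (Fin.lastCases hlast hinit)

lemma GLexLT.sum_le {p : ℕ} {α β : Fin p → ℕ} (h : GLexLT α β) : ∑ i, α i ≤ ∑ i, β i := by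
  rcases h with h | ⟨h, -⟩
  exacts [h.le, h.le]

lemma IsGLexEnum.monotone_sum {p : ℕ} {κ : ℕ → Fin p → ℕ} (hκ : IsGLexEnum κ) :
    Monotone fun n => ∑ i, κ n i := fun m n hmn =>
  hmn.eq_or_lt.elim (fun h => h ▸ le_rfl) fun h => (hκ.2 m n h).sum_le

lemma IsGLexEnum.sum_le_of_lt_hdim {p : ℕ} {κ : ℕ → Fin p → ℕ} (hκ : IsGLexEnum κ) {N d : ℕ}
    (hN : N < hdim p d) : ∑ i, κ N i ≤ d := by
  by_contra! hd
  have hsub : (Nat.antidiagonalTuple (p + 1) d).image Fin.init ⊆ (range N).image κ := by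
    intro α hα
    obtain ⟨n, rfl⟩ := hκ.1.2 α
    refine mem_image_of_mem κ (mem_range.2 (lt_of_not_ge fun hNn => ?_))
    obtain ⟨β, hβ, hβα⟩ := mem_image.1 hα
    have hdeg : ∑ i, κ n i ≤ d := by
      rw [← hβα, ← Nat.mem_antidiagonalTuple.1 hβ, Fin.sum_univ_castSucc]
      exact Nat.le_add_right _ _
    have hmono : ∑ i, κ N i ≤ ∑ i, κ n i := hκ.monotone_sum hNn
    omega
  have := (card_le_card hsub).trans card_image_le
  rw [card_image_init_antidiagonalTuple, card_range] at this
  omega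

lemma exists_totalDegree_le_eval_eq_vdm_update {p : ℕ} (κ : ℕ → Fin p → ℕ)
    (ξ : ℕ → Fin p → ℂ) {j d : ℕ} (hdeg : ∀ N ≤ j, ∑ i, κ N i ≤ d) :
    ∃ P : MvPolynomial (Fin p) ℂ, P.totalDegree ≤ d ∧
      ∀ z, eval z P = vdm κ (j + 1) (Function.update ξ j z) := by
  set A : Matrix (Fin (j + 1)) (Fin (j + 1)) ℂ := Matrix.of fun M N => mono κ N (ξ M)
  have hvdm : ∀ z, vdm κ (j + 1) (Function.update ξ j z) =
      (A.updateRow (Fin.last j) fun N => mono κ N z).det := by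
    intro z
    unfold vdm
    congr 1
    ext M N
    rcases Fin.eq_castSucc_or_eq_last M with ⟨M, rfl⟩ | rfl
    · simp [A, (Fin.castSucc_lt_last M).ne, M.is_lt.ne]
    · simp [A]
  refine ⟨∑ N : Fin (j + 1), (A.updateRow (Fin.last j) (Pi.single N 1)).det • ∏ i, X i ^ κ N i,
    (totalDegree_finsetSum _ _).trans (Finset.sup_le fun N _ => ?_), fun z => ?_⟩
  · refine (totalDegree_smul_le _ _).trans ((totalDegree_finsetProd _ _).trans ?_)
    simp only [totalDegree_X_pow]
    exact hdeg N (Nat.lt_succ_iff.1 N.2)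
  · rw [hvdm, Matrix.det_updateRow_eq_sum_mul]
    simp [smul_eval, mono, mul_comm]

lemma norm_vdm_update_le_of_mesh {p : ℕ} {κ : ℕ → Fin p → ℕ} (hκ : IsGLexEnum κ)
    {K A : Set (Fin p → ℂ)} {c : ℝ} {d j : ℕ} {ξ : ℕ → Fin p → ℂ} (hj : j < hdim p d)
    (hc : 0 ≤ c)
    (hmesh : ∀ P : MvPolynomial (Fin p) ℂ, P.totalDegree ≤ d → ∀ z ∈ K,
      ‖eval z P‖ ≤ c * sSup ((fun a => ‖eval a P‖) '' A))
    (hmax : ∀ a ∈ A, ‖vdm κ (j + 1) (Function.update ξ j a)‖ ≤ ‖vdm κ (j + 1) ξ‖)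
    {z : Fin p → ℂ} (hz : z ∈ K) :
    ‖vdm κ (j + 1) (Function.update ξ j z)‖ ≤ c * ‖vdm κ (j + 1) ξ‖ := by
  obtain ⟨P, hPdeg, hP⟩ := exists_totalDegree_le_eval_eq_vdm_update κ ξ
    fun N hN => hκ.sum_le_of_lt_hdim (hN.trans_lt hj)
  have hsup : sSup ((fun a => ‖eval a P‖) '' A) ≤ ‖vdm κ (j + 1) ξ‖ :=
    Real.sSup_le (by rintro _ ⟨a, ha, rfl⟩; simpa only [hP] using hmax a ha) (norm_nonneg _)
  calc ‖vdm κ (j + 1) (Function.update ξ j z)‖ = ‖eval z P‖ := by rw [hP]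
    _ ≤ c * sSup ((fun a => ‖eval a P‖) '' A) := hmesh P hPdeg z hz
    _ ≤ c * ‖vdm κ (j + 1) ξ‖ := mul_le_mul_of_nonneg_left hsup hc

theorem weakly_admissible_mesh_gives_pseudoLeja_general {p : ℕ} (hp : 1 ≤ p)
    (κ : ℕ → Fin p → ℕ) (hκ : IsGLexEnum κ)
    (K : Set (Fin p → ℂ))
    (A : ℕ → Set (Fin p → ℂ)) (hAK : ∀ d, A d ⊆ K)
    (C : ℕ → ℝ) (hC1 : ∀ d, 1 ≤ C d)
    (hCnorm : ∀ d : ℕ, ∀ P : MvPolynomial (Fin p) ℂ, P.totalDegree ≤ d → ∀ z ∈ K,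
      ‖MvPolynomial.eval z P‖ ≤
        C d * sSup ((fun a => ‖MvPolynomial.eval a P‖) '' A d))
    (hCgrowth : Filter.Tendsto (fun d : ℕ => C d ^ ((d : ℝ)⁻¹)) Filter.atTop (nhds 1))
    (ξ : ℕ → Fin p → ℂ) (hξ0 : ξ 0 ∈ A 0)
    (hξmem : ∀ d : ℕ, 1 ≤ d → ∀ N : ℕ, hdim p (d - 1) ≤ N → N < hdim p d → ξ N ∈ A d)
    (hξmax : ∀ d : ℕ, 1 ≤ d → ∀ N : ℕ, hdim p (d - 1) ≤ N → N < hdim p d → ∀ a ∈ A d,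
      ‖vdm κ (N + 1) (Function.update ξ N a)‖ ≤
        ‖vdm κ (N + 1) ξ‖) :
    IsPseudoLeja κ K ξ (fun N => C (degOf p N)) := by
  refine ⟨fun j => ?_, fun j _ => hC1 _, fun j hj z hz => ?_, ?_⟩
  · rcases Nat.eq_zero_or_pos j with rfl | hj
    · exact hAK 0 hξ0
    · exact hAK _ (hξmem _ (one_le_degOf hp hj) j (hdim_degOf_sub_one_le hp hj)
        (lt_hdim_degOf hp j))
  · exact norm_vdm_update_le_of_mesh hκ (lt_hdim_degOf hp j) (zero_le_one.trans (hC1 _))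
      (hCnorm _) (hξmax _ (one_le_degOf hp hj) j (hdim_degOf_sub_one_le hp hj)
        (lt_hdim_degOf hp j)) hz
  · refine hCgrowth.congr' ?_
    filter_upwards [eventually_ge_atTop 1] with d hd
    rw [image_Ico_hdim_degOf hp hd, csSup_singleton]

/-- a weakly admissible mesh `(A_d, C_d)` for `K` yields, by discrete Leja
extraction, a pseudo Leja sequence for `K` with Edrei growth `M̄_N = C_d` for
`h_{d-1} ≤ N < h_d`. -/
theorem weakly_admissible_mesh_gives_pseudoLeja {p : ℕ} (hp : 1 ≤ p)
    (κ : ℕ → Fin p → ℕ) (hκ : IsGLexEnum κ)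
    (K : Set (Fin p → ℂ)) (hKc : IsCompact K) (hKd : Determining K)
    (A : ℕ → Set (Fin p → ℂ)) (hAfin : ∀ d, (A d).Finite) (hAK : ∀ d, A d ⊆ K)
    (C : ℕ → ℝ) (hC1 : ∀ d, 1 ≤ C d)
    (hCnorm : ∀ d : ℕ, ∀ P : MvPolynomial (Fin p) ℂ, P.totalDegree ≤ d → ∀ z ∈ K,
      ‖MvPolynomial.eval z P‖ ≤
        C d * sSup ((fun a => ‖MvPolynomial.eval a P‖) '' A d))
    (hCgrowth : Filter.Tendsto (fun d : ℕ => C d ^ ((d : ℝ)⁻¹)) Filter.atTop (nhds 1))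
    (ξ : ℕ → Fin p → ℂ) (hξ0 : ξ 0 ∈ A 0)
    (hξmem : ∀ d : ℕ, 1 ≤ d → ∀ N : ℕ, hdim p (d - 1) ≤ N → N < hdim p d → ξ N ∈ A d)
    (hξmax : ∀ d : ℕ, 1 ≤ d → ∀ N : ℕ, hdim p (d - 1) ≤ N → N < hdim p d → ∀ a ∈ A d,
      ‖vdm κ (N + 1) (Function.update ξ N a)‖ ≤
        ‖vdm κ (N + 1) ξ‖) :
    IsPseudoLeja κ K ξ (fun N => C (degOf p N)) :=
  weakly_admissible_mesh_gives_pseudoLeja_general hp κ hκ K A hAK C hC1 hCnorm hCgrowth ξ hξ0 hξmem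
    hξmax

end PseudoLeja
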